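/- arXiv:1612.04203 — 3 statements merged into one kernel-verified Lean document; each statement's English description precedes it below -/
import Mathlib

section
/- Define instances I_i over a signature with a binary relation R and a ternary relation G as follows: I_i is an R-path a_0 → a_1 → ... → a_{2^i} of length 2^i, together with facts G(a_j, a_m, a_l) for every subpath from a_j to a_l of length 2^p (p ≤ i) whose midpoint is a_m. Define predicates R_0(x,y) := R(x,y) and R_p(x,y) := ∃z G(x,z,y) ∧ R_{p−1}(x,z) ∧ R_{p−1}(z,y). Then for every p ≥ 0, whenever an instance satisfies R_p(a,b), there is an R-path of length 2^p from a to b; consequently I_i satisfies ∃x,y R_i(x,y) but no proper subinstance of I_i does. -/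
/-- The predicates `R_p`: `R_0 = R` and `R_{p+1}(x,y) = ∃z, G(x,z,y) ∧ R_p(x,z) ∧ R_p(z,y)`. -/
def Rp {D : Type*} (R : D → D → Prop) (Gr : D → D → D → Prop) : ℕ → D → D → Prop
  | 0 => R
  | p + 1 => fun x y => ∃ z, Gr x z y ∧ Rp R Gr p x z ∧ Rp R Gr p z y

/-- The `R`-facts of the instance `I_i`: an `R`-path `0 → 1 → ⋯ → 2^i`. -/
def RI (i : ℕ) (a b : ℕ) : Prop := b = a + 1 ∧ b ≤ 2 ^ i

/-- The `G`-facts of the instance `I_i`: `G(a, m, l)` for every (aligned) subpath from `a`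
to `l` of length `2^(p+1)` (p + 1 ≤ i) whose midpoint is `m`. -/
def GI (i : ℕ) (a m l : ℕ) : Prop :=
  ∃ p < i, 2 ^ (p + 1) ∣ a ∧ m = a + 2 ^ p ∧ l = a + 2 ^ (p + 1) ∧ l ≤ 2 ^ i

/-- An `R`-path of length `n` from `a` to `b`. -/
def RPath {D : Type*} (R : D → D → Prop) (n : ℕ) (a b : D) : Prop :=
  ∃ c : Fin (n + 1) → D, c 0 = a ∧ c (Fin.last n) = b ∧
    ∀ k : Fin n, R (c k.castSucc) (c k.succ)

lemma rpath_concat {D : Type*} {R : D → D → Prop} {m n : ℕ} {a z b : D}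
    (h1 : RPath R m a z) (h2 : RPath R n z b) : RPath R (m + n) a b := by
  obtain ⟨c1, hc10, hc1l, hc1s⟩ := h1
  obtain ⟨c2, hc20, hc2l, hc2s⟩ := h2
  have H1 : ∀ j (hj : j < m), R (c1 ⟨j, by omega⟩) (c1 ⟨j + 1, by omega⟩) :=
    fun j hj => hc1s ⟨j, hj⟩
  have H2 : ∀ j (hj : j < n), R (c2 ⟨j, by omega⟩) (c2 ⟨j + 1, by omega⟩) :=
    fun j hj => hc2s ⟨j, hj⟩
  have hz1 : c1 ⟨m, by omega⟩ = z := hc1l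
  have hz2 : c2 ⟨0, by omega⟩ = z := by
    rw [show (⟨0, by omega⟩ : Fin (n + 1)) = 0 by ext; simp]; exact hc20
  refine ⟨fun k => if h : (k : ℕ) ≤ m then c1 ⟨k, by omega⟩ else c2 ⟨(k : ℕ) - m, by omega⟩,
    ?_, ?_, ?_⟩
  · simp only [Fin.val_zero]
    simp only [Nat.zero_le, ↓reduceDIte]
    rw [show (⟨0, by omega⟩ : Fin (m + 1)) = 0 by ext; simp]; exact hc10
  · simp only [Fin.val_last]
    rcases Nat.eq_zero_or_pos n with hn | hn
    · subst hn
      rw [dif_pos (by omega)]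
      have : b = z := by rw [← hc2l, show Fin.last 0 = 0 by ext; simp]; exact hc20
      rw [this]; exact hz1
    · rw [dif_neg (by omega)]
      have : (⟨m + n - m, by omega⟩ : Fin (n + 1)) = Fin.last n := by ext; simp
      rw [this]; exact hc2l
  · intro k
    simp only [Fin.coe_castSucc, Fin.val_succ]
    have hk : (k : ℕ) < m + n := k.isLt
    by_cases h1 : (k : ℕ) < m
    · rw [dif_pos (by omega), dif_pos (by omega)]
      exact H1 k h1
    · by_cases h2 : (k : ℕ) = m
      · rw [dif_pos (by omega), dif_neg (by omega)]
        have hn : 0 < n := by omega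
        have e1 : (⟨(k : ℕ), by omega⟩ : Fin (m + 1)) = ⟨m, by omega⟩ := by ext; simp [h2]
        have e2 : (⟨(k : ℕ) + 1 - m, by omega⟩ : Fin (n + 1)) = ⟨1, by omega⟩ := by
          ext; simp; omega
        rw [e1, hz1, e2, ← hz2]
        have := H2 0 hn
        convert this using 2 <;> ext <;> simp
      · rw [dif_neg (by omega), dif_neg (by omega)]
        have hkm : (k : ℕ) - m < n := by omega
        have := H2 ((k : ℕ) - m) hkm
        convert this using 2
        ext; simp; omega

lemma rp_sound {D : Type*} (R : D → D → Prop) (Gr : D → D → D → Prop) :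
    ∀ (p : ℕ) (a b : D), Rp R Gr p a b → RPath R (2 ^ p) a b := by
  intro p
  induction p with
  | zero =>
    intro a b h
    refine ⟨![a, b], rfl, rfl, ?_⟩
    · intro k
      fin_cases k
      exact h
  | succ p ih =>
    intro a b h
    obtain ⟨z, _, h1, h2⟩ := h
    rw [pow_succ, mul_two]
    exact rpath_concat (ih a z h1) (ih z b h2)

lemma rp_exists (i : ℕ) : ∀ p ≤ i, ∀ a, 2 ^ p ∣ a → a + 2 ^ p ≤ 2 ^ i →
    Rp (RI i) (GI i) p a (a + 2 ^ p) := by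
  intro p
  induction p with
  | zero => intro _ a _ h; exact ⟨rfl, by simpa using h⟩
  | succ p ih =>
    intro hpi a ha hb
    have hps : (2:ℕ) ^ p + 2 ^ p = 2 ^ (p + 1) := by rw [pow_succ, mul_two]
    have hd : 2 ^ p ∣ a := dvd_trans (pow_dvd_pow 2 (Nat.le_succ p)) ha
    refine ⟨a + 2 ^ p, ⟨p, by omega, ha, rfl, rfl, hb⟩, ?_, ?_⟩
    · exact ih (by omega) a hd (by omega)
    · have hrw : a + 2 ^ (p + 1) = a + 2 ^ p + 2 ^ p := by omega
      rw [hrw]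
      exact ih (by omega) (a + 2 ^ p) (Dvd.dvd.add hd dvd_rfl) (by omega)

lemma rp_min (i : ℕ) (R' : ℕ → ℕ → Prop) (G' : ℕ → ℕ → ℕ → Prop)
    (hR : ∀ a b, R' a b → RI i a b) (hG : ∀ a m l, G' a m l → GI i a m l) :
    ∀ p x y, Rp R' G' p x y →
      y = x + 2 ^ p ∧ 2 ^ p ∣ x ∧ y ≤ 2 ^ i ∧
      (∀ a, x ≤ a → a < y → R' a (a + 1)) ∧
      (∀ a m l, GI i a m l → x ≤ a → l ≤ y → G' a m l) := by
  intro p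
  induction p with
  | zero =>
    intro x y h
    obtain ⟨h1, h2⟩ := hR x y h
    refine ⟨by simpa using h1, one_dvd x, by omega, ?_, ?_⟩
    · intro a hax hay
      have : a = x := by omega
      subst this
      rwa [h1] at h
    · intro a m l hgi hxa hly
      obtain ⟨q, hq, _, _, hl, _⟩ := hgi
      have h2q : 2 ≤ 2 ^ (q + 1) := by
        calc 2 = 2 ^ 1 := rfl
        _ ≤ 2 ^ (q + 1) := Nat.pow_le_pow_right (by norm_num) (by omega)
      omega
  | succ p ih =>
    intro x y h
    obtain ⟨z, hGz, h1, h2⟩ := h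
    obtain ⟨hy1, hd1, hy2, hRall1, hGall1⟩ := ih x z h1
    obtain ⟨hy1', hd2, hy2', hRall2, hGall2⟩ := ih z y h2
    obtain ⟨q, hqi, hqdvd, hm, hl, hly⟩ := hG x z y hGz
    have hqp : q = p := by
      have hq : (2:ℕ) ^ q = 2 ^ p := by omega
      exact Nat.pow_right_injective le_rfl hq
    rw [hqp] at hqi hqdvd hm hl
    have hpp : (2:ℕ) ^ p + 2 ^ p = 2 ^ (p + 1) := by rw [pow_succ, mul_two]
    have hp1 : 1 ≤ (2:ℕ) ^ p := Nat.one_le_two_pow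
    refine ⟨by omega, hqdvd, hly, ?_, ?_⟩
    · intro a hax hay
      by_cases hz : a < z
      · exact hRall1 a hax hz
      · exact hRall2 a (by omega) (by omega)
    · intro a m l hgi hxa hly2
      obtain ⟨q2, hq2i, hq2d, hm2, hl2, hl2i⟩ := hgi
      by_cases hlz : l ≤ z
      · exact hGall1 a m l ⟨q2, hq2i, hq2d, hm2, hl2, hl2i⟩ hxa hlz
      · by_cases haz : z ≤ a
        · exact hGall2 a m l ⟨q2, hq2i, hq2d, hm2, hl2, hl2i⟩ haz (by omega)
        · -- a < z < l : straddling case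
          have hq2p : q2 ≤ p := by
            have hle : (2:ℕ) ^ (q2 + 1) ≤ 2 ^ (p + 1) := by omega
            have := (Nat.pow_le_pow_iff_right (by norm_num : 1 < 2)).mp hle
            omega
          rcases lt_or_eq_of_le hq2p with hlt | heq
          · exfalso
            have hdz : 2 ^ (q2 + 1) ∣ z := by
              rw [hy1]
              exact dvd_add (dvd_trans (pow_dvd_pow 2 (by omega)) hqdvd)
                (pow_dvd_pow 2 (by omega))
            have := Nat.le_of_dvd (by omega) (Nat.dvd_sub hdz hq2d)
            omega
          · subst heq
            have hax : a = x := by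
              by_contra hne
              have hpos : 0 < a - x := by omega
              have := Nat.le_of_dvd hpos (Nat.dvd_sub hq2d hqdvd)
              omega
            have hmz : m = z := by omega
            have hlyy : l = y := by omega
            rw [hax, hmz, hlyy]
            exact hGz

theorem doubling_program (i : ℕ) :
    (∀ (D : Type) (R : D → D → Prop) (Gr : D → D → D → Prop) (p : ℕ) (a b : D),
        Rp R Gr p a b → RPath R (2 ^ p) a b) ∧
    (∃ x y, Rp (RI i) (GI i) i x y) ∧
    (∀ (R' : ℕ → ℕ → Prop) (G' : ℕ → ℕ → ℕ → Prop),
        (∀ a b, R' a b → RI i a b) → (∀ a m l, G' a m l → GI i a m l) →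
        ((∃ a b, RI i a b ∧ ¬ R' a b) ∨ (∃ a m l, GI i a m l ∧ ¬ G' a m l)) →
        ¬ ∃ x y, Rp R' G' i x y) := by
  refine ⟨fun D R Gr p a b h => rp_sound R Gr p a b h, ?_, ?_⟩
  · refine ⟨0, 2 ^ i, ?_⟩
    have := rp_exists i i le_rfl 0 (dvd_zero _) (by simp)
    simpa using this
  · intro R' G' hR hG hdel ⟨x, y, hxy⟩
    obtain ⟨hy, hd, hyi, hRall, hGall⟩ := rp_min i R' G' hR hG i x y hxy
    have hp1 : 1 ≤ (2:ℕ) ^ i := Nat.one_le_two_pow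
    have hx0 : x = 0 := by omega
    rcases hdel with ⟨a, b, ⟨hb1, hb2⟩, hnot⟩ | ⟨a, m, l, hgi, hnot⟩
    · exact hnot (hb1 ▸ hRall a (by omega) (by omega))
    · obtain ⟨q, hq, hqd, hqm, hql, hqli⟩ := hgi
      exact hnot (hGall a m l ⟨q, hq, hqd, hqm, hql, hqli⟩ (by omega) (by omega))
end

section
/- Let C be a monotone arity-two cycluit (each AND/OR gate has at most 2 inputs, no self-loops) with a tree decomposition T of width k. Then the tree decomposition T' obtained by adding to each bag the in-neighbors of all gates occurring in it is a valid tree decomposition of C of width at most 3k + 2 (bag size at most 3(k+1)), and it is regrouped: for every gate g, some bag of T' contains g together with all its in-neighbors. -/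
def IsTreeDecomp {V ι : Type*} (G : SimpleGraph V) (T : SimpleGraph ι)
    (bags : ι → Set V) : Prop :=
  T.IsTree ∧ (∀ v, ∃ i, v ∈ bags i) ∧
  (∀ u v, G.Adj u v → ∃ i, u ∈ bags i ∧ v ∈ bags i) ∧
  (∀ v, (T.induce {i | v ∈ bags i}).Connected)

/-- Given an arity-two cycluit (fan-in ≤ 2, no self-loops) with a width-`k` tree
decomposition, adding to each bag the in-neighbors of all its gates yields a valid tree
decomposition of bag size at most `3(k+1)` which is regrouped: every gate has a bag
containing it together with all its in-neighbors. -/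
theorem regrouped_decomposition {G ι : Type*} (W : G → G → Prop)
    (harity : ∀ g, Set.ncard {u | W u g} ≤ 2) (hself : ∀ g, ¬ W g g)
    (T : SimpleGraph ι) (bags : ι → Set G) (k : ℕ)
    (hdec : IsTreeDecomp (SimpleGraph.fromRel W) T bags)
    (hw : ∀ i, (bags i).ncard ≤ k + 1) :
    let bags' : ι → Set G := fun i => bags i ∪ {u | ∃ g ∈ bags i, W u g}
    IsTreeDecomp (SimpleGraph.fromRel W) T bags' ∧
    (∀ i, (bags' i).ncard ≤ 3 * (k + 1)) ∧
    (∀ g : G, ∃ i, insert g {u | W u g} ⊆ bags' i) := by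
  classical
  intro bags'
  obtain ⟨htree, hcov, hedge, hconn⟩ := hdec
  have hsub : ∀ i, bags i ⊆ bags' i := fun i => Set.subset_union_left
  refine ⟨⟨htree, ?_, ?_, ?_⟩, ?_, ?_⟩
  · intro v
    obtain ⟨i, hi⟩ := hcov v
    exact ⟨i, hsub i hi⟩
  · intro u v huv
    obtain ⟨i, hu, hv⟩ := hedge u v huv
    exact ⟨i, hsub i hu, hsub i hv⟩
  · -- connectivity
    intro v
    have hset : {i | v ∈ bags' i} =
        ⋃₀ (insert {i | v ∈ bags i}
          ((fun g => {i | v ∈ bags i} ∪ {i | g ∈ bags i}) '' {g | W v g})) := by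
      ext i
      simp only [Set.sUnion_insert, Set.mem_union, Set.mem_setOf_eq, Set.sUnion_image,
        Set.mem_iUnion, bags']
      constructor
      · rintro (h | ⟨g, hg, hWg⟩)
        · exact Or.inl h
        · exact Or.inr ⟨g, hWg, Or.inr hg⟩
      · rintro (h | ⟨g, hWg, (h | h)⟩)
        · exact Or.inl h
        · exact Or.inl h
        · exact Or.inr ⟨g, h, hWg⟩
    rw [hset]
    obtain ⟨i₀, hi₀⟩ := hcov v
    -- each A ∪ A_g is connected and they all contain A which is nonempty
    have hAne : ({i | v ∈ bags i} : Set ι).Nonempty := ⟨i₀, hi₀⟩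
    have hAconn := hconn v
    have hAg : ∀ g, W v g →
        (T.induce ({i | v ∈ bags i} ∪ {i | g ∈ bags i})).Connected := by
      intro g hWg
      have hne : v ≠ g := fun h => hself g (h ▸ hWg)
      have hadj : (SimpleGraph.fromRel W).Adj v g := ⟨hne, Or.inl hWg⟩
      obtain ⟨j, hjv, hjg⟩ := hedge v g hadj
      exact T.induce_union_connected hAconn.preconnected (hconn g).preconnected ⟨j, hjv, hjg⟩
    apply T.induce_sUnion_connected_of_pairwise_not_disjoint
    · exact ⟨_, Set.mem_insert _ _⟩
    · rintro s t hs ht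
      have hAs : {i | v ∈ bags i} ⊆ s := by
        rcases hs with rfl | ⟨g, hg, rfl⟩
        · exact subset_rfl
        · exact Set.subset_union_left
      have hAt : {i | v ∈ bags i} ⊆ t := by
        rcases ht with rfl | ⟨g, hg, rfl⟩
        · exact subset_rfl
        · exact Set.subset_union_left
      exact ⟨i₀, hAs hi₀, hAt hi₀⟩
    · rintro s (rfl | ⟨g, hg, rfl⟩)
      · exact hAconn
      · exact hAg g hg
  · -- cardinality
    intro i
    by_cases hfin : (bags' i).Finite
    · have hbfin : (bags i).Finite := hfin.subset (hsub i)
      have hNfin : ∀ g ∈ bags i, ({u | W u g} : Set G).Finite := by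
        intro g hg
        exact hfin.subset (fun u hu => Or.inr ⟨g, hg, hu⟩)
      set t : G → Finset G := fun g =>
        if h : ({u | W u g} : Set G).Finite then h.toFinset else ∅ with ht
      have hBsub : {u | ∃ g ∈ bags i, W u g} ⊆ ↑(hbfin.toFinset.biUnion t) := by
        rintro u ⟨g, hg, hWg⟩
        simp only [Finset.coe_biUnion, Set.mem_iUnion, Finset.mem_coe]
        refine ⟨g, by simpa using hg, ?_⟩
        simp only [ht, dif_pos (hNfin g hg), Set.Finite.mem_toFinset]
        exact hWg
      have htcard : ∀ g ∈ hbfin.toFinset, (t g).card ≤ 2 := by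
        intro g hg
        rw [Set.Finite.mem_toFinset] at hg
        have h := hNfin g hg
        simp only [ht, dif_pos h]
        have := harity g
        rwa [Set.ncard_eq_toFinset_card _ h] at this
      calc (bags' i).ncard ≤ (bags i).ncard + ({u | ∃ g ∈ bags i, W u g}).ncard :=
            Set.ncard_union_le _ _
        _ ≤ (k + 1) + (hbfin.toFinset.biUnion t).card := by
            refine Nat.add_le_add (hw i) ?_
            have := Set.ncard_le_ncard hBsub (hbfin.toFinset.biUnion t).finite_toSet
            rwa [Set.ncard_coe_finset] at this
        _ ≤ (k + 1) + 2 * (k + 1) := by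
            refine Nat.add_le_add_left ?_ _
            calc (hbfin.toFinset.biUnion t).card ≤ ∑ g ∈ hbfin.toFinset, (t g).card :=
                  Finset.card_biUnion_le
              _ ≤ ∑ _g ∈ hbfin.toFinset, 2 := Finset.sum_le_sum htcard
              _ = 2 * hbfin.toFinset.card := by rw [Finset.sum_const, smul_eq_mul,
                  Nat.mul_comm]
              _ ≤ 2 * (k + 1) := by
                  refine Nat.mul_le_mul_left _ ?_
                  have := hw i
                  rwa [Set.ncard_eq_toFinset_card _ hbfin] at this
        _ = 3 * (k + 1) := by ring
    · rw [Set.Infinite.ncard hfin]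
      exact Nat.zero_le _
  · -- regrouped
    intro g
    obtain ⟨i, hi⟩ := hcov g
    refine ⟨i, ?_⟩
    rintro u (rfl | hu)
    · exact hsub i hi
    · exact Or.inr ⟨g, hi, hu⟩
end

section
/- Let T be a rooted tree where each internal bag b is labeled with a set dom(b). Suppose we 'scrub' T bottom-up: remove from each bag b every element x such that x is not required at b (not used by an atom assigned to b) and x does not appear in any child of b. Then the result is still a tree decomposition (occurrences of each element still form connected subtrees), provided the original T was a tree decomposition and each atom was assigned to a bag containing all its variables. -/
/-! Scrubbing keeps exactly the occurrences of `x` that lie in the upward closure of the bags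
of atoms using `x`. An upward-closed set cuts a connected set of nodes in a connected set: the
topmost node of the original set is an ancestor of every surviving node, so it survives too,
and so does every node on the parent chain from a surviving node up to it. -/

/-- Connectivity of a set of nodes of a rooted tree (given by a parent function): it is
empty, or it has a topmost element `t` such that every element reaches `t` by a
parent-chain staying inside the set. -/
def RConnected {ι : Type*} (par : ι → ι) (S : Set ι) : Prop :=
  S = ∅ ∨ ∃ t ∈ S, ∀ i ∈ S, ∃ n, par^[n] i = t ∧ ∀ m ≤ n, par^[m] i ∈ S

theorem RConnected.inter_of_mapsTo {ι : Type*} {par : ι → ι} {S U : Set ι}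
    (hS : RConnected par S) (hU : Set.MapsTo par U U) : RConnected par (S ∩ U) := by
  rcases hS with hS | ⟨t, htS, hchain⟩
  · exact Or.inl (by simp [hS])
  rcases (S ∩ U).eq_empty_or_nonempty with hSU | ⟨i₀, hi₀S, hi₀U⟩
  · exact Or.inl hSU
  obtain ⟨n₀, hn₀, -⟩ := hchain i₀ hi₀S
  have htU : t ∈ U := hn₀ ▸ hU.iterate n₀ hi₀U
  refine Or.inr ⟨t, ⟨htS, htU⟩, fun i ⟨hiS, hiU⟩ => ?_⟩
  obtain ⟨n, hn, hpath⟩ := hchain i hiS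
  exact ⟨n, hn, fun m hm => ⟨hpath m hm, hU.iterate m hiU⟩⟩

theorem mapsTo_setOf_exists_iterate_eq {ι A : Type*} (par : ι → ι) (p : A → Prop) (f : A → ι) :
    Set.MapsTo par {i | ∃ a, p a ∧ ∃ n, par^[n] (f a) = i}
      {i | ∃ a, p a ∧ ∃ n, par^[n] (f a) = i} :=
  fun _ ⟨a, ha, n, hn⟩ => ⟨a, ha, n + 1, by rw [Function.iterate_succ_apply', hn]⟩

theorem scrubbing_preserves_decomposition_general {ι X A : Type*}
    (parent : ι → ι)
    (bags : ι → Set X)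
    (hconn : ∀ x, RConnected parent {i | x ∈ bags i})
    (atomVars : A → Set X) (assign : A → ι)
    (hcov : ∀ a, atomVars a ⊆ bags (assign a)) :
    let bags' : ι → Set X := fun i =>
      {x ∈ bags i | ∃ a, x ∈ atomVars a ∧ ∃ n, parent^[n] (assign a) = i}
    (∀ a, atomVars a ⊆ bags' (assign a)) ∧
    (∀ x, RConnected parent {i | x ∈ bags' i}) :=
  ⟨fun a _ hx => ⟨hcov a hx, a, hx, 0, rfl⟩, fun x =>
    (hconn x).inter_of_mapsTo (mapsTo_setOf_exists_iterate_eq parent (x ∈ atomVars ·) assign)⟩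

/-- Scrubbing a tree decomposition (keeping an occurrence of `x` at bag `i` only when some
atom using `x` is assigned in the subtree rooted at `i`) preserves atom coverage and the
connectedness of element occurrences. -/
theorem scrubbing_preserves_decomposition {ι X A : Type*}
    (parent : ι → ι) (root : ι) (hroot : parent root = root)
    (hreach : ∀ i, ∃ n, parent^[n] i = root)
    (bags : ι → Set X)
    (hconn : ∀ x, RConnected parent {i | x ∈ bags i})
    (atomVars : A → Set X) (assign : A → ι)
    (hcov : ∀ a, atomVars a ⊆ bags (assign a)) :
    let bags' : ι → Set X := fun i =>
      {x ∈ bags i | ∃ a, x ∈ atomVars a ∧ ∃ n, parent^[n] (assign a) = i}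
    (∀ a, atomVars a ⊆ bags' (assign a)) ∧
    (∀ x, RConnected parent {i | x ∈ bags' i}) :=
  scrubbing_preserves_decomposition_general parent bags hconn atomVars assign hcov
end
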